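/- Let N := |𝓕| + 1 and 𝓓' := (𝓓 × {1,…,N}) ∪ 𝓕. Suppose F̂ ⊆ 𝓕 with |F̂| ≤ k and σ̂ : 𝓓' → F̂ ∪ {out} satisfy |σ̂⁻¹(i)| ≥ N·L_i for every i ∈ F̂, |σ̂⁻¹(out)| ≤ N·m + N − 1, and c(j, i) ≤ R whenever σ̂((j, p)) = i ∈ F̂ for a copy (j, p) ∈ 𝓓 × {1,…,N}. Then there exists σ' : 𝓓 → F̂ ∪ {out} with |σ'⁻¹(i)| ≥ L_i for every i ∈ F̂, |σ'⁻¹(out)| ≤ m, and c(σ'(j), j) ≤ R whenever σ'(j) ≠ out; that is, (F̂, σ') is a feasible LBkSupO-solution with maximum radius at most R. -/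

import Mathlib

/-!
Call a client `j` *served by* a center `i` if `σ̂` sends some copy of `j` to `i`. For a set `T` of
centers with `B` the clients served by `T`, the copies sent into `T` number at least `N·∑_{i∈T} L_i`
and at most `N·|B| + |𝓕| < N·(|B| + 1)`, so `∑_{i∈T} L_i ≤ |B|`. This is Hall's condition for
matching `L_i` slots of each center `i` injectively to clients it serves; the matched clients go
to their slot's center, the other served clients to any center serving them, and only clients
served by no center become outliers. All `N` copies of such a client are outliers of `σ̂`, so
there are at most `(N·m + N − 1) / N`, that is at most `m`, of them.
-/

open Finset Function

theorem le_of_mul_le_mul_add_of_lt {N a b r : ℕ} (h : N * a ≤ N * b + r) (hr : r < N) :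
    a ≤ b :=
  Nat.lt_succ_iff.mp <| Nat.lt_of_mul_lt_mul_left (a := N) <| by rw [Nat.mul_succ]; omega

section Hall

variable {ι α : Type*} [DecidableEq ι] [DecidableEq α]

theorem exists_injective_sigma_fin_of_sum_le (F : Finset ι) (t : ι → Finset α) (L : ι → ℕ)
    (hall : ∀ T ⊆ F, ∑ i ∈ T, L i ≤ #(T.biUnion t)) :
    ∃ f : (Σ i : F, Fin (L i)) → α, Injective f ∧ ∀ s, f s ∈ t s.1 := by
  refine (all_card_le_biUnion_card_iff_exists_injective _).mp fun s => ?_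
  set T := (s.image Sigma.fst).map (Embedding.subtype (· ∈ F))
  calc #s ≤ #((s.image Sigma.fst).sigma fun _ => univ) :=
        card_le_card fun x hx => mem_sigma.mpr ⟨mem_image_of_mem _ hx, mem_univ _⟩
    _ = ∑ i ∈ T, L i := by simp [T, card_sigma, sum_map]
    _ ≤ #(T.biUnion t) := hall T fun i hi => by
        obtain ⟨j, -, rfl⟩ := mem_map.mp hi
        exact j.2
    _ = #(s.biUnion fun x => t x.1) := by
        simp only [T, map_eq_image, image_biUnion, Embedding.subtype_apply]

theorem exists_assignment_of_sum_le (F : Finset ι) (t : ι → Finset α) (L : ι → ℕ)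
    (hall : ∀ T ⊆ F, ∑ i ∈ T, L i ≤ #(T.biUnion t)) :
    ∃ σ : α → Option ι, (∀ j i, σ j = some i → i ∈ F ∧ j ∈ t i) ∧
      (∀ i ∈ F, L i ≤ #{j ∈ t i | σ j = some i}) ∧
      (∀ j, σ j = none → ∀ i ∈ F, j ∉ t i) := by
  obtain ⟨f, hf, hft⟩ := exists_injective_sigma_fin_of_sum_le F t L hall
  let fallback : α → Option ι := fun j => if h : ∃ i ∈ F, j ∈ t i then some h.choose else none
  let σ := extend f (fun s => some s.1.1) fallback
  have hσf (s) : σ (f s) = some s.1.1 := hf.extend_apply _ _ s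
  have hσ (j) (hj : ¬∃ s, f s = j) : σ j = fallback j := extend_apply' _ _ j hj
  refine ⟨σ, fun j i hji => ?_, fun i hi => ?_, fun j hj i hi hji => ?_⟩
  · by_cases hj : ∃ s, f s = j
    · obtain ⟨s, rfl⟩ := hj
      obtain rfl := Option.some.inj ((hσf s).symm.trans hji)
      exact ⟨s.1.2, hft s⟩
    · rw [hσ j hj] at hji
      by_cases h : ∃ i ∈ F, j ∈ t i
      · simp only [fallback, dif_pos h, Option.some.injEq] at hji
        exact hji ▸ h.choose_spec
      · simp [fallback, dif_neg h] at hji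
  · calc L i = #(univ : Finset (Fin (L i))) := by simp
      _ ≤ #{j ∈ t i | σ j = some i} :=
        card_le_card_of_injOn (fun q => f ⟨⟨i, hi⟩, q⟩)
          (fun q _ => mem_filter.mpr ⟨hft _, hσf _⟩)
          (fun a _ b _ hab => by simpa using hf hab)
  · by_cases hj' : ∃ s, f s = j
    · obtain ⟨s, rfl⟩ := hj'
      simp [hσf] at hj
    · rw [hσ j hj'] at hj
      simp [fallback, dif_pos (⟨i, hi, hji⟩ : ∃ i ∈ F, j ∈ t i)] at hj

end Hall

section Replication

variable {α β κ ι : Type*} [DecidableEq ι]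
  (σ : (α × κ) ⊕ β → Option ι) (𝓓 : Finset α) (P : Finset κ) (E : Finset β)

def servedBy (i : ι) : Finset α := {j ∈ 𝓓 | ∃ p ∈ P, σ (.inl (j, p)) = some i}

variable {σ 𝓓 P}

theorem mem_servedBy {i : ι} {j : α} :
    j ∈ servedBy σ 𝓓 P i ↔ j ∈ 𝓓 ∧ ∃ p ∈ P, σ (.inl (j, p)) = some i :=
  mem_filter

theorem card_biUnion_filter_eq_some_le [DecidableEq α] [DecidableEq β] [DecidableEq κ]
    (T : Finset ι) :
    #(T.biUnion fun i => {d ∈ (𝓓 ×ˢ P).disjSum E | σ d = some i}) ≤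
      #(T.biUnion (servedBy σ 𝓓 P)) * #P + #E := by
  calc _ ≤ #((T.biUnion (servedBy σ 𝓓 P) ×ˢ P).disjSum E) := by
        refine card_le_card fun d hd => ?_
        obtain ⟨i, hi, hd⟩ := mem_biUnion.mp hd
        obtain ⟨hd, hσd⟩ := mem_filter.mp hd
        rcases d with ⟨j, p⟩ | e
        · simp only [inl_mem_disjSum, mem_product] at hd ⊢
          exact ⟨mem_biUnion.mpr ⟨i, hi, mem_servedBy.mpr ⟨hd.1, p, hd.2, hσd⟩⟩, hd.2⟩
        · simpa using hd
    _ = _ := by rw [card_disjSum, card_product]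

theorem sum_le_card_biUnion_servedBy [DecidableEq α] [DecidableEq β] [DecidableEq κ]
    {F : Finset ι} {L : ι → ℕ}
    (hlb : ∀ i ∈ F, #P * L i ≤ #{d ∈ (𝓓 ×ˢ P).disjSum E | σ d = some i}) (hE : #E < #P) :
    ∀ T ⊆ F, ∑ i ∈ T, L i ≤ #(T.biUnion (servedBy σ 𝓓 P)) := by
  intro T hT
  refine le_of_mul_le_mul_add_of_lt ?_ hE
  calc #P * ∑ i ∈ T, L i
      ≤ ∑ i ∈ T, #{d ∈ (𝓓 ×ˢ P).disjSum E | σ d = some i} := by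
        rw [mul_sum]; exact sum_le_sum fun i hi => hlb i (hT hi)
    _ = #(T.biUnion fun i => {d ∈ (𝓓 ×ˢ P).disjSum E | σ d = some i}) := by
        refine (card_biUnion fun i _ i' _ hii' => disjoint_filter.mpr fun d _ h h' => ?_).symm
        exact hii' (Option.some.inj (h.symm.trans h'))
    _ ≤ _ := by rw [mul_comm]; exact card_biUnion_filter_eq_some_le E T

theorem card_mul_le_card_filter_none {F : Finset ι}
    (hrange : ∀ d ∈ (𝓓 ×ˢ P).disjSum E, ∀ i, σ d = some i → i ∈ F)
    {U : Finset α} (hU : U ⊆ 𝓓) (hunserved : ∀ j ∈ U, ∀ i ∈ F, j ∉ servedBy σ 𝓓 P i) :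
    #U * #P ≤ #{d ∈ (𝓓 ×ˢ P).disjSum E | σ d = none} := by
  calc #U * #P = #((U ×ˢ P).disjSum (∅ : Finset β)) := by simp
    _ ≤ _ := by
        refine card_le_card fun d hd => ?_
        rcases d with ⟨j, p⟩ | e
        · simp only [inl_mem_disjSum, mem_product] at hd
          have hmem : Sum.inl (j, p) ∈ (𝓓 ×ˢ P).disjSum E := by simp [hU hd.1, hd.2]
          refine mem_filter.mpr ⟨hmem, Option.eq_none_iff_forall_ne_some.mpr fun i hi => ?_⟩
          exact hunserved j hd.1 i (hrange _ hmem i hi) (mem_servedBy.mpr ⟨hU hd.1, p, hd.2, hi⟩)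
        · simp at hd

end Replication

theorem stmt_15 {X : Type*} [MetricSpace X] [DecidableEq X]
    (𝓕 𝓓 : Finset X) (L : X → ℕ) (m : ℕ) (R : ℝ)
    (N : ℕ) (hN : N = 𝓕.card + 1)
    (D' : Finset ((X × ℕ) ⊕ X))
    (hD' : D' = ((𝓓 ×ˢ Finset.Icc 1 N).image Sum.inl) ∪ (𝓕.image Sum.inr))
    (Fhat : Finset X)
    (σhat : (X × ℕ) ⊕ X → Option X)
    (hrange : ∀ d ∈ D', ∀ i, σhat d = some i → i ∈ Fhat)
    (hlb : ∀ i ∈ Fhat, N * L i ≤ (D'.filter fun d => σhat d = some i).card)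
    (hout : (D'.filter fun d => σhat d = none).card ≤ N * m + N - 1)
    (hrad : ∀ j p i, Sum.inl (j, p) ∈ D' → σhat (Sum.inl (j, p)) = some i →
      dist j i ≤ R) :
    ∃ σ' : X → Option X,
      (∀ j ∈ 𝓓, ∀ i, σ' j = some i → i ∈ Fhat ∧ dist i j ≤ R) ∧
      (∀ i ∈ Fhat, L i ≤ (𝓓.filter fun j => σ' j = some i).card) ∧
      (𝓓.filter fun j => σ' j = none).card ≤ m := by
  set P := Icc 1 N
  have hP : #P = N := by simp [P]
  obtain rfl : D' = (𝓓 ×ˢ P).disjSum 𝓕 := by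
    rw [hD']; ext (_ | _) <;> simp
  rw [← hP] at hlb hout
  have hall := sum_le_card_biUnion_servedBy 𝓕 hlb (by omega)
  obtain ⟨σ', hserved, hcount, hnone⟩ := exists_assignment_of_sum_le Fhat _ L hall
  refine ⟨σ', fun j _ i hi => ?_, fun i hi => ?_, ?_⟩
  · obtain ⟨hiF, hj⟩ := hserved j i hi
    obtain ⟨hj𝓓, p, hp, hσ⟩ := mem_servedBy.mp hj
    exact ⟨hiF, dist_comm i j ▸ hrad j p i (by simp [hj𝓓, hp]) hσ⟩
  · exact (hcount i hi).trans (card_le_card (filter_subset_filter _ (filter_subset _ _)))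
  · refine le_of_mul_le_mul_add_of_lt (N := #P) (r := #P - 1) ?_ (by omega)
    calc #P * #{j ∈ 𝓓 | σ' j = none}
        ≤ #{d ∈ (𝓓 ×ˢ P).disjSum 𝓕 | σhat d = none} := by
          rw [mul_comm]
          exact card_mul_le_card_filter_none 𝓕 hrange (filter_subset _ _)
            fun j hj => hnone j (mem_filter.mp hj).2
      _ ≤ #P * m + (#P - 1) := by omega
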